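/- arXiv:1201.4267 — 6 statements merged into one kernel-verified Lean document; each statement's English description precedes it below -/
import Mathlib

section
/- Let k be an algebraically closed field of characteristic zero and let A, B be finite-dimensional k-algebras. If S is a simple finite-dimensional left A-module and T a simple finite-dimensional left B-module, then S ⊗_k T is a simple left module over the tensor product algebra A ⊗_k B. Moreover, every simple left A ⊗_k B-module is isomorphic to S ⊗_k T for some simple left A-module S and simple left B-module T. -/
open TensorProduct

universe u v

/-- A factorization of a left `A ⊗[k] B`-module `X` as the tensor product `S ⊗[k] T` of a
simple left `A`-module `S` and a simple left `B`-module `T`, where `S ⊗[k] T` is a left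
`A ⊗[k] B`-module via `(a ⊗ b) • (s ⊗ t) = (a • s) ⊗ (b • t)`. -/
structure SimpleTensorFactorization (k : Type u) [Field k]
    (A : Type v) [Ring A] [Algebra k A] (B : Type v) [Ring B] [Algebra k B]
    (X : Type v) [AddCommGroup X] [Module (A ⊗[k] B) X] where
  S : Type v
  T : Type v
  [addS : AddCommGroup S]
  [modkS : Module k S]
  [modAS : Module A S]
  [towS : IsScalarTower k A S]
  [addT : AddCommGroup T]
  [modkT : Module k T]
  [modBT : Module B T]
  [towT : IsScalarTower k B T]
  [modST : Module (A ⊗[k] B) (S ⊗[k] T)]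
  simpleS : IsSimpleModule A S
  simpleT : IsSimpleModule B T
  hact : ∀ (a : A) (b : B) (s : S) (t : T),
    (a ⊗ₜ[k] b : A ⊗[k] B) • (s ⊗ₜ[k] t : S ⊗[k] T) = (a • s) ⊗ₜ[k] (b • t)
  equiv : X ≃ₗ[A ⊗[k] B] S ⊗[k] T

/-!
Over the algebraically closed field `k`, Schur's lemma gives `End_A S = k`; since
`S ⊗ T ≅ S ^ dim T` as an `A`-module, every `A`-linear map `S → S ⊗ T` is `s ↦ s ⊗ t` for a fixed `t`. A nonzero
submodule `W` of `S ⊗ T` contains a simple `A`-submodule, necessarily isomorphic to `S`, hence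
`S ⊗ t ⊆ W` for some `t ≠ 0`. The `t` with `S ⊗ t ⊆ W` form a nonzero `B`-submodule of `T`, which
is therefore all of `T`, so `W = S ⊗ T`.

Conversely, for a simple `A ⊗ B`-module `X` pick a simple `A`-submodule `S₀` of `X` and a simple
`B`-submodule `T₀` of `Hom_A(S₀, X)`, on which `B` acts through `X`. Evaluation `s ⊗ f ↦ f s` is a
nonzero `A ⊗ B`-linear map from `S₀ ⊗ T₀`, simple by the first part, to `X`, hence an isomorphism.
-/

section SimpleTensor

variable {k : Type*} [Field k] {A : Type*} [Ring A] [Algebra k A]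
  {S : Type*} [AddCommGroup S] [Module k S] [Module A S] [IsScalarTower k A S]
  {T : Type*} [AddCommGroup T] [Module k T]

noncomputable def TensorProduct.AlgebraTensorModule.equivFinsuppOfBasisRight {ι : Type*}
    [DecidableEq ι] (b : Module.Basis ι k T) : S ⊗[k] T ≃ₗ[A] ι →₀ S :=
  (congr (.refl A S) b.repr).trans (finsuppScalarRight k A S ι)

@[simp]
lemma TensorProduct.AlgebraTensorModule.equivFinsuppOfBasisRight_tmul_apply {ι : Type*}
    [DecidableEq ι] (b : Module.Basis ι k T) (s : S) (t : T) (i : ι) :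
    equivFinsuppOfBasisRight (A := A) b (s ⊗ₜ t) i = b.repr t i • s := by
  simp [equivFinsuppOfBasisRight]

variable [IsAlgClosed k] [FiniteDimensional k S] [IsSimpleModule A S] [FiniteDimensional k T]

theorem LinearMap.exists_eq_tmul (φ : S →ₗ[A] S ⊗[k] T) : ∃ t : T, ∀ s, φ s = s ⊗ₜ t := by
  classical
  let b := Module.finBasis k T
  let e := AlgebraTensorModule.equivFinsuppOfBasisRight (A := A) (S := S) b
  choose c hc using fun i ↦ (IsSimpleModule.algebraMap_end_bijective_of_isAlgClosed k).2
    (Finsupp.lapply i ∘ₗ e.toLinearMap ∘ₗ φ)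
  refine ⟨b.equivFun.symm c, fun s ↦ e.injective (Finsupp.ext fun i ↦ ?_)⟩
  have hi : c i • s = e (φ s) i := LinearMap.congr_fun (hc i) s
  rw [← hi, AlgebraTensorModule.equivFinsuppOfBasisRight_tmul_apply, ← b.equivFun_apply,
    b.equivFun.apply_symm_apply]

theorem Submodule.exists_forall_tmul_mem {N : Submodule A (S ⊗[k] T)} (hN : N ≠ ⊥) :
    ∃ t ≠ 0, ∀ s : S, s ⊗ₜ t ∈ N := by
  classical
  have : IsArtinian A (S ⊗[k] T) := isArtinian_of_tower k inferInstance
  obtain ⟨m, hm, hmN⟩ := (eq_bot_or_exists_atom_le N).resolve_left hN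
  have : IsSimpleModule A m := isSimpleModule_iff_isAtom.mpr hm
  let e := AlgebraTensorModule.equivFinsuppOfBasisRight (A := A) (S := S) (Module.finBasis k T)
  obtain ⟨i, hi⟩ : ∃ i, Finsupp.lapply i ∘ₗ e.toLinearMap ∘ₗ m.subtype ≠ 0 := by
    by_contra! h
    refine hm.1 (eq_bot_iff.2 fun x hx ↦ ?_)
    have : e x = 0 := Finsupp.ext fun i ↦ LinearMap.congr_fun (h i) ⟨x, hx⟩
    simpa using this
  let ψ := m.subtype ∘ₗ
    (LinearEquiv.ofBijective _ (LinearMap.bijective_of_ne_zero hi)).symm.toLinearMap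
  have hψ : Function.Injective ψ := m.injective_subtype.comp (LinearEquiv.injective _)
  obtain ⟨t, ht⟩ := ψ.exists_eq_tmul
  have : Nontrivial S := IsSimpleModule.nontrivial A S
  obtain ⟨s₀, hs₀⟩ := exists_ne (0 : S)
  refine ⟨t, ?_, fun s ↦ ht s ▸ hmN (by simp [ψ])⟩
  rintro rfl
  exact hs₀ (hψ (by rw [ht, tmul_zero, map_zero]))

variable {B : Type*} [Ring B] [Algebra k B] [Module B T] [IsSimpleModule B T]

theorem isSimpleModule_tensorProduct [Module (A ⊗[k] B) (S ⊗[k] T)]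
    (hact : ∀ (a : A) (b : B) (s : S) (t : T),
      (a ⊗ₜ[k] b : A ⊗[k] B) • (s ⊗ₜ[k] t : S ⊗[k] T) = (a • s) ⊗ₜ[k] (b • t)) :
    IsSimpleModule (A ⊗[k] B) (S ⊗[k] T) := by
  have : Nontrivial S := IsSimpleModule.nontrivial A S
  have : Nontrivial T := IsSimpleModule.nontrivial B T
  refine { eq_bot_or_eq_top := fun W ↦ or_iff_not_imp_left.2 fun hW ↦ ?_ }
  have hleft (a : A) (x : S ⊗[k] T) : (a ⊗ₜ[k] (1 : B)) • x = a • x := by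
    induction x using TensorProduct.induction_on with
    | zero => simp
    | tmul s t => rw [hact, one_smul, smul_tmul']
    | add x y hx hy => rw [smul_add, smul_add, hx, hy]
  let WA : Submodule A (S ⊗[k] T) :=
    { W.toAddSubmonoid with smul_mem' := fun a x hx ↦ hleft a x ▸ W.smul_mem _ hx }
  obtain ⟨t₀, ht₀, hWt₀⟩ := Submodule.exists_forall_tmul_mem (N := WA)
    (by simpa [← Submodule.toAddSubmonoid_inj] using hW)
  let TW : Submodule B T :=
    { carrier := {t | ∀ s : S, s ⊗ₜ t ∈ W}
      zero_mem' := fun s ↦ by simp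
      add_mem' := fun ht ht' s ↦ by rw [tmul_add]; exact W.add_mem (ht s) (ht' s)
      smul_mem' := fun b t ht s ↦ by
        simpa only [hact, one_smul] using W.smul_mem ((1 : A) ⊗ₜ[k] b) (ht s) }
  have hTW : TW = ⊤ := (eq_bot_or_eq_top TW).resolve_left fun h ↦
    ht₀ ((Submodule.mem_bot B).1 (h ▸ (hWt₀ : t₀ ∈ TW)))
  refine Submodule.eq_top_iff'.2 fun x ↦ ?_
  induction x using TensorProduct.induction_on with
  | zero => exact W.zero_mem
  | tmul s t => exact (hTW ▸ Submodule.mem_top : t ∈ TW) s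
  | add x y hx hy => exact W.add_mem hx hy

end SimpleTensor

section TensorModule

variable (k : Type*) [Field k] (A B : Type*) [Ring A] [Algebra k A] [Ring B] [Algebra k B]
  (S T : Type*) [AddCommMonoid S] [Module k S] [Module A S] [IsScalarTower k A S]
  [AddCommMonoid T] [Module k T] [Module B T] [IsScalarTower k B T]

-- Not an instance: for `S = A`, `T = B` it would be a second action of `A ⊗[k] B` on itself.
noncomputable abbrev TensorProduct.tensorModule : Module (A ⊗[k] B) (S ⊗[k] T) :=
  .compHom _ (Module.endTensorEndAlgHom.comp
    (Algebra.TensorProduct.map (Algebra.lsmul k k S) (Algebra.lsmul k k T))).toRingHom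

lemma TensorProduct.tensorModule_tmul_smul_tmul (a : A) (b : B) (s : S) (t : T) :
    letI := tensorModule k A B S T
    (a ⊗ₜ[k] b) • (s ⊗ₜ[k] t) = (a • s) ⊗ₜ[k] (b • t) := rfl

end TensorModule

section Factorization

attribute [local instance] TensorProduct.tensorModule

variable {k : Type u} [Field k] {A : Type v} [Ring A] [Algebra k A] {B : Type v} [Ring B]
  [Algebra k B] {X : Type v} [AddCommGroup X] [Module k X] [Module A X] [Module B X]
  [IsScalarTower k A X] [IsScalarTower k B X] [SMulCommClass A B X] [Module (A ⊗[k] B) X]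
  {M : Type v} [AddCommGroup M] [Module k M] [Module A M] [IsScalarTower k A M]

noncomputable def evalTensor (hX : ∀ (a : A) (b : B) (x : X), (a ⊗ₜ[k] b) • x = a • b • x)
    (N : Submodule B (M →ₗ[A] X)) : M ⊗[k] N →ₗ[A ⊗[k] B] X where
  toFun := TensorProduct.lift ((LinearMap.restrictScalarsₗ k A M X k ∘ₗ
      (N.subtype.restrictScalars k)).flip)
  map_add' := map_add _
  map_smul' r x := by
    induction r using TensorProduct.induction_on with
    | zero => simp
    | add r r' hr hr' => simp only [add_smul, map_add, hr, hr', RingHom.id_apply]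
    | tmul a b =>
      induction x using TensorProduct.induction_on with
      | zero => simp
      | add x y hx hy => simp_all only [smul_add, map_add, RingHom.id_apply]
      | tmul s f =>
        rw [tensorModule_tmul_smul_tmul]
        simp [hX, smul_comm a b]

@[simp]
lemma evalTensor_tmul (hX : ∀ (a : A) (b : B) (x : X), (a ⊗ₜ[k] b) • x = a • b • x)
    (N : Submodule B (M →ₗ[A] X)) (m : M) (f : N) :
    evalTensor hX N (m ⊗ₜ f) = (f : M →ₗ[A] X) m := rfl

theorem nonempty_simpleTensorFactorization_of_tmul_smul [IsAlgClosed k] [FiniteDimensional k X]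
    [IsSimpleModule (A ⊗[k] B) X] (hX : ∀ (a : A) (b : B) (x : X), (a ⊗ₜ[k] b) • x = a • b • x) :
    Nonempty (SimpleTensorFactorization k A B X) := by
  have : Nontrivial X := IsSimpleModule.nontrivial (A ⊗[k] B) X
  have : IsArtinian A X := isArtinian_of_tower k inferInstance
  obtain ⟨S₀, hS₀⟩ := IsAtomic.exists_atom (Submodule A X)
  have : IsSimpleModule A S₀ := isSimpleModule_iff_isAtom.2 hS₀
  have : FiniteDimensional k S₀ :=
    .of_injective (S₀.subtype.restrictScalars k) S₀.injective_subtype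
  have : FiniteDimensional k (S₀ →ₗ[A] X) := .of_injective
    (LinearMap.restrictScalarsₗ k A S₀ X k) (LinearMap.restrictScalars_injective _)
  have : Nontrivial (S₀ →ₗ[A] X) :=
    ⟨S₀.subtype, 0, fun h ↦ hS₀.1 (by simpa using congrArg LinearMap.range h)⟩
  have : IsArtinian B (S₀ →ₗ[A] X) := isArtinian_of_tower k inferInstance
  obtain ⟨T₀, hT₀⟩ := IsAtomic.exists_atom (Submodule B (S₀ →ₗ[A] X))
  have : IsSimpleModule B T₀ := isSimpleModule_iff_isAtom.2 hT₀
  have : FiniteDimensional k T₀ :=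
    .of_injective (T₀.subtype.restrictScalars k) T₀.injective_subtype
  have hev : evalTensor hX T₀ ≠ 0 := by
    obtain ⟨f, hfT₀, hf⟩ := Submodule.exists_mem_ne_zero_of_ne_bot hT₀.1
    obtain ⟨s, hs⟩ := DFunLike.ne_iff.1 hf
    exact fun h ↦ hs (by simpa [h] using (evalTensor_tmul hX T₀ s ⟨f, hfT₀⟩).symm)
  have := isSimpleModule_tensorProduct (tensorModule_tmul_smul_tmul k A B S₀ T₀)
  exact ⟨{ S := S₀, T := T₀, simpleS := inferInstance, simpleT := inferInstance
           hact := tensorModule_tmul_smul_tmul k A B S₀ T₀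
           equiv := (LinearEquiv.ofBijective _ (LinearMap.bijective_of_ne_zero hev)).symm }⟩

end Factorization

theorem AlgHom.isScalarTower_compHom {k A C X : Type*} [CommSemiring k] [Semiring A] [Semiring C]
    [Algebra k A] [Algebra k C] [AddCommMonoid X] [Module k X] [Module C X] [IsScalarTower k C X]
    (f : A →ₐ[k] C) :
    letI := Module.compHom X f.toRingHom
    IsScalarTower k A X :=
  letI := Module.compHom X f.toRingHom
  ⟨fun c a x ↦ show f (c • a) • x = c • f a • x by rw [map_smul, smul_assoc]⟩

theorem IsSimpleModule.nonempty_simpleTensorFactorization {k : Type u} [Field k] [IsAlgClosed k]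
    {A : Type v} [Ring A] [Algebra k A] [FiniteDimensional k A]
    {B : Type v} [Ring B] [Algebra k B] [FiniteDimensional k B]
    (X : Type v) [AddCommGroup X] [Module (A ⊗[k] B) X] [IsSimpleModule (A ⊗[k] B) X] :
    Nonempty (SimpleTensorFactorization k A B X) := by
  let incl : A →ₐ[k] A ⊗[k] B := Algebra.TensorProduct.includeLeft
  let incr : B →ₐ[k] A ⊗[k] B := Algebra.TensorProduct.includeRight
  let : Module k X := .compHom X (algebraMap k (A ⊗[k] B))
  let : Module A X := .compHom X incl.toRingHom
  let : Module B X := .compHom X incr.toRingHom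
  have : IsScalarTower k (A ⊗[k] B) X := .of_compHom k _ X
  have := incl.isScalarTower_compHom (X := X)
  have := incr.isScalarTower_compHom (X := X)
  have hsmul (a : A) (b : B) (x : X) : (a ⊗ₜ[k] b) • x = a • b • x := by
    show _ = (a ⊗ₜ[k] (1 : B)) • ((1 : A) ⊗ₜ[k] b) • x
    rw [smul_smul, Algebra.TensorProduct.tmul_mul_tmul, mul_one, one_mul]
  have : SMulCommClass A B X := ⟨fun a b x ↦ by
    show (a ⊗ₜ[k] (1 : B)) • ((1 : A) ⊗ₜ[k] b) • x = ((1 : A) ⊗ₜ[k] b) • (a ⊗ₜ[k] (1 : B)) • x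
    rw [smul_smul, smul_smul, Algebra.TensorProduct.tmul_mul_tmul,
      Algebra.TensorProduct.tmul_mul_tmul, mul_one, one_mul, mul_one, one_mul]⟩
  have : FiniteDimensional k X := Module.Finite.trans (A ⊗[k] B) X
  exact nonempty_simpleTensorFactorization_of_tmul_smul hsmul

theorem simple_modules_of_tensor_algebra_general
    (k : Type u) [Field k] [IsAlgClosed k]
    (A : Type v) [Ring A] [Algebra k A] [FiniteDimensional k A]
    (B : Type v) [Ring B] [Algebra k B] [FiniteDimensional k B]
    (S : Type v) [AddCommGroup S] [Module k S] [Module A S] [IsScalarTower k A S]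
    [FiniteDimensional k S] (hS : IsSimpleModule A S)
    (T : Type v) [AddCommGroup T] [Module k T] [Module B T]
    [FiniteDimensional k T] (hT : IsSimpleModule B T)
    [Module (A ⊗[k] B) (S ⊗[k] T)]
    (hact : ∀ (a : A) (b : B) (s : S) (t : T),
      (a ⊗ₜ[k] b : A ⊗[k] B) • (s ⊗ₜ[k] t : S ⊗[k] T) = (a • s) ⊗ₜ[k] (b • t)) :
    IsSimpleModule (A ⊗[k] B) (S ⊗[k] T)
    ∧ ∀ (X : Type v) [AddCommGroup X] [Module (A ⊗[k] B) X], IsSimpleModule (A ⊗[k] B) X →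
        Nonempty (SimpleTensorFactorization k A B X) :=
  ⟨isSimpleModule_tensorProduct hact,
    fun X _ _ _ ↦ IsSimpleModule.nonempty_simpleTensorFactorization X⟩

/-- Let `k` be an algebraically closed field of characteristic zero and let
`A`, `B` be finite-dimensional `k`-algebras.  If `S` is a simple finite-dimensional left
`A`-module and `T` a simple finite-dimensional left `B`-module, then `S ⊗[k] T` is a simple
left module over `A ⊗[k] B` (acting by `(a ⊗ b) • (s ⊗ t) = (a • s) ⊗ (b • t)`).  Moreover,
every simple left `A ⊗[k] B`-module is isomorphic to such an `S ⊗[k] T`. -/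
theorem simple_modules_of_tensor_algebra
    (k : Type u) [Field k] [IsAlgClosed k] [CharZero k]
    (A : Type v) [Ring A] [Algebra k A] [FiniteDimensional k A]
    (B : Type v) [Ring B] [Algebra k B] [FiniteDimensional k B]
    (S : Type v) [AddCommGroup S] [Module k S] [Module A S] [IsScalarTower k A S]
    [FiniteDimensional k S] (hS : IsSimpleModule A S)
    (T : Type v) [AddCommGroup T] [Module k T] [Module B T] [IsScalarTower k B T]
    [FiniteDimensional k T] (hT : IsSimpleModule B T)
    [Module (A ⊗[k] B) (S ⊗[k] T)]
    (hact : ∀ (a : A) (b : B) (s : S) (t : T),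
      (a ⊗ₜ[k] b : A ⊗[k] B) • (s ⊗ₜ[k] t : S ⊗[k] T) = (a • s) ⊗ₜ[k] (b • t)) :
    IsSimpleModule (A ⊗[k] B) (S ⊗[k] T)
    ∧ ∀ (X : Type v) [AddCommGroup X] [Module (A ⊗[k] B) X], IsSimpleModule (A ⊗[k] B) X →
        Nonempty (SimpleTensorFactorization k A B X) :=
  simple_modules_of_tensor_algebra_general k A B S hS T hT hact
end

section
/- Let k be an algebraically closed field of characteristic zero and let A, B be finite-dimensional k-algebras. Let S be a simple left A-module with projective cover P, and T a simple left B-module with projective cover Q. Then P ⊗_k Q is a projective cover of the simple A ⊗_k B-module S ⊗_k T. -/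
/-!
By right exactness, `ker (f ⊗ g) = ker f ⊗ Q + P ⊗ ker g`. A superfluous kernel lies in the
Jacobson radical `J`, and since `P ⊗ Q` is finite-dimensional, any submodule of `J(P ⊗ Q)` is
superfluous; so it suffices to show `J(P) ⊗ Q ⊆ J(P ⊗ Q)` (and symmetrically). Let `K` be a
maximal submodule of `P ⊗ Q`. The simple `A ⊗ B`-module `(P ⊗ Q)/K` is semisimple over `A`:
the elements `1 ⊗ b` act `A`-linearly, so an `A`-isotypic component is an `A ⊗ B`-submodule,
hence all of it. So the `A`-linear map `p ↦ p ⊗ q mod K` kills `J(P)`.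
Projectivity holds because `P ⊗ Q` is a direct summand of the free module on `P × Q`.
-/

open TensorProduct

universe u v

def Submodule.IsSuperfluous {R M : Type*} [Ring R] [AddCommGroup M] [Module R M]
    (W : Submodule R M) : Prop :=
  ∀ K : Submodule R M, W ⊔ K = ⊤ → K = ⊤

section Superfluous

variable {R M N : Type*} [Ring R] [AddCommGroup M] [Module R M] [AddCommGroup N] [Module R N]

theorem Submodule.IsSuperfluous.le_jacobson {W : Submodule R M} (hW : W.IsSuperfluous) :
    W ≤ Module.jacobson R M :=
  le_sInf fun m hm => of_not_not fun hWm => hm.1 (hW m (hm.2 _ (right_lt_sup.2 hWm)))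

theorem Submodule.isSuperfluous_of_le_jacobson [IsCoatomic (Submodule R M)] {W : Submodule R M}
    (hW : W ≤ Module.jacobson R M) : W.IsSuperfluous := by
  intro K hK
  by_contra hne
  obtain ⟨m, hm, hKm⟩ := (eq_top_or_exists_le_coatom K).resolve_left hne
  exact hm.1 (top_unique (hK ▸ sup_le (hW.trans (sInf_le hm)) hKm))

theorem Module.Finite.of_isSuperfluous_ker [Module.Finite R N] (f : M →ₗ[R] N)
    (hf : Function.Surjective f) (hker : (LinearMap.ker f).IsSuperfluous) : Module.Finite R M := by
  classical
  obtain ⟨s, hs⟩ := Module.Finite.fg_top (R := R) (M := N)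
  refine ⟨⟨s.image (Function.surjInv hf), hker _ ?_⟩⟩
  rw [sup_comm, ← Submodule.comap_map_eq, Submodule.map_span, Finset.coe_image, ← Set.image_comp,
    Function.comp_surjInv, Set.image_id, hs, Submodule.comap_top]

end Superfluous

section FullyInvariant

variable {R C M : Type*} [Ring R] [Ring C] [AddCommGroup M] [Module R M]

theorem IsSemisimpleModule.of_isFullyInvariant_eq_bot_or_top [IsAtomic (Submodule R M)]
    (h : ∀ N : Submodule R M, N.IsFullyInvariant → N = ⊥ ∨ N = ⊤) : IsSemisimpleModule R M := by
  refine .of_sSup_simples_eq_top (top_unique ?_)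
  obtain htop | ⟨S, hS, -⟩ := eq_bot_or_exists_atom_le (⊤ : Submodule R M)
  · exact htop ▸ bot_le
  have := isSimpleModule_iff_isAtom.2 hS
  rw [← (h _ (.isotypicComponent R M S)).resolve_left (bot_lt_isotypicComponent S).ne']
  exact sSup_le_sSup fun m ⟨e⟩ => IsSimpleModule.congr e

theorem Submodule.IsFullyInvariant.eq_bot_or_eq_top [Module C M] [IsSimpleModule C M]
    (φ : R →+* C) (hφ : ∀ r (x : M), φ r • x = r • x)
    (hgen : Subring.closure (Set.range φ ∪ (Set.range φ).centralizer) = ⊤)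
    {N : Submodule R M} (hN : N.IsFullyInvariant) : N = ⊥ ∨ N = ⊤ := by
  have hstab : ∀ c : C, ∀ x ∈ N, c • x ∈ N := by
    intro c
    have hc : c ∈ Subring.closure _ := hgen ▸ Subring.mem_top c
    induction hc using Subring.closure_induction with
    | mem c hc =>
      obtain ⟨r, rfl⟩ | hc := hc
      · exact fun x hx => hφ r x ▸ N.smul_mem r hx
      · let τ : Module.End R M :=
          { toFun := (c • ·)
            map_add' := smul_add c
            map_smul' := fun r x => by
              rw [RingHom.id_apply, ← hφ, ← hφ, smul_smul, smul_smul, hc _ ⟨r, rfl⟩] }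
        exact fun x hx => hN τ hx
    | zero => simp
    | one => simp
    | add c d _ _ hc hd => exact fun x hx => add_smul c d x ▸ N.add_mem (hc x hx) (hd x hx)
    | neg c _ hc => exact fun x hx => neg_smul c x ▸ N.neg_mem (hc x hx)
    | mul c d _ _ hc hd => exact fun x hx => mul_smul c d x ▸ hc _ (hd x hx)
  let N' : Submodule C M := { N.toAddSubmonoid with smul_mem' := hstab }
  rcases IsSimpleOrder.eq_bot_or_eq_top N' with h | h
  · exact .inl (SetLike.ext fun x => SetLike.ext_iff.1 h x)
  · exact .inr (SetLike.ext fun x => SetLike.ext_iff.1 h x)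

end FullyInvariant

section TensorAction

variable {k A B M N X : Type*} [CommRing k] [Ring A] [Algebra k A] [Ring B] [Algebra k B]
  [AddCommGroup M] [Module k M] [Module A M] [AddCommGroup N] [Module k N] [Module B N]
  [Module (A ⊗[k] B) (M ⊗[k] N)] [AddCommGroup X] [Module k X] [Module (A ⊗[k] B) X]

def LinearMap.ofTmulSMul (φ : M ⊗[k] N →ₗ[k] X)
    (h : ∀ (a : A) (b : B) (m : M) (n : N),
      φ ((a ⊗ₜ[k] b) • (m ⊗ₜ[k] n)) = (a ⊗ₜ[k] b) • φ (m ⊗ₜ[k] n)) :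
    M ⊗[k] N →ₗ[A ⊗[k] B] X where
  toFun := φ
  map_add' := φ.map_add
  map_smul' x z := by
    induction x using TensorProduct.induction_on with
    | zero => simp
    | tmul a b =>
      induction z using TensorProduct.induction_on with
      | zero => simp
      | tmul m n => exact h a b m n
      | add z w hz hw => simp only [smul_add, map_add, hz, hw]
    | add x y hx hy => simp only [add_smul, map_add, hx, hy]

theorem isScalarTower_of_tmul_smul_tmul [IsScalarTower k A M]
    (hact : ∀ (a : A) (b : B) (m : M) (n : N),
      (a ⊗ₜ[k] b) • (m ⊗ₜ[k] n) = (a • m) ⊗ₜ[k] (b • n)) :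
    IsScalarTower k (A ⊗[k] B) (M ⊗[k] N) :=
  .of_algebraMap_smul fun c z => by
    induction z using TensorProduct.induction_on with
    | zero => simp
    | tmul m n => rw [Algebra.TensorProduct.algebraMap_apply, hact, one_smul, algebraMap_smul,
        smul_tmul']
    | add z w hz hw => rw [smul_add, smul_add, hz, hw]

theorem Module.Projective.tensorProduct_of_tmul_smul_tmul [IsScalarTower k A M]
    [IsScalarTower k B N] [Module.Projective A M] [Module.Projective B N]
    (hact : ∀ (a : A) (b : B) (m : M) (n : N),
      (a ⊗ₜ[k] b) • (m ⊗ₜ[k] n) = (a • m) ⊗ₜ[k] (b • n)) :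
    Module.Projective (A ⊗[k] B) (M ⊗[k] N) := by
  obtain ⟨sM, hsM⟩ := ‹Module.Projective A M›
  obtain ⟨sN, hsN⟩ := ‹Module.Projective B N›
  let e := finsuppTensorFinsupp k k A B M N
  have he : ∀ (a : A) (b : B) (u : M →₀ A) (v : N →₀ B),
      e ((a • u) ⊗ₜ[k] (b • v)) = (a ⊗ₜ[k] b) • e (u ⊗ₜ[k] v) := by
    intro a b u v
    ext ⟨i, j⟩
    simp [e, finsuppTensorFinsupp_apply, Algebra.TensorProduct.tmul_mul_tmul]
  let σ : M ⊗[k] N →ₗ[A ⊗[k] B] M × N →₀ A ⊗[k] B :=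
    .ofTmulSMul (e.toLinearMap ∘ₗ map (sM.restrictScalars k) (sN.restrictScalars k))
      fun a b m n => by simp [hact, he]
  let π := Finsupp.linearCombination (A ⊗[k] B) fun x : M × N => x.1 ⊗ₜ[k] x.2
  have hπe : ∀ (u : M →₀ A) (v : N →₀ B), π (e (u ⊗ₜ[k] v)) =
      Finsupp.linearCombination A id u ⊗ₜ[k] Finsupp.linearCombination B id v := by
    intro u v
    induction u using Finsupp.induction_linear with
    | zero => simp
    | add u₁ u₂ h₁ h₂ => simp only [add_tmul, map_add, h₁, h₂]
    | single m a =>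
      induction v using Finsupp.induction_linear with
      | zero => simp
      | add v₁ v₂ h₁ h₂ => simp only [tmul_add, map_add, h₁, h₂]
      | single n b => simp [e, π, finsuppTensorFinsupp_single, hact]
  refine .of_split σ π (LinearMap.ext fun z => ?_)
  induction z using TensorProduct.induction_on with
  | zero => simp
  | tmul m n => exact (hπe (sM m) (sN n)).trans (by rw [hsM m, hsN n]; rfl)
  | add z w hz hw => simp only [map_add, LinearMap.comp_apply] at hz hw ⊢; rw [hz, hw]

end TensorAction

section Restriction

variable {k A B U : Type*} [Field k] [Ring A] [Algebra k A] [Ring B] [Algebra k B]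
  [AddCommGroup U] [Module (A ⊗[k] B) U] [IsSimpleModule (A ⊗[k] B) U]
  [Module k U] [IsScalarTower k (A ⊗[k] B) U] [Module.Finite k U]

theorem IsSemisimpleModule.of_isSimpleModule_tensorProduct_left [Module A U]
    (hA : ∀ (a : A) (x : U), (a ⊗ₜ[k] (1 : B)) • x = a • x) : IsSemisimpleModule A U := by
  have : IsScalarTower k A U := .of_algebraMap_smul fun c x => by
    rw [← hA, ← Algebra.TensorProduct.algebraMap_apply, algebraMap_smul]
  have : IsArtinian A U := isArtinian_of_tower k inferInstance
  refine .of_isFullyInvariant_eq_bot_or_top fun N hN => hN.eq_bot_or_eq_top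
    Algebra.TensorProduct.includeLeftRingHom hA ((Subring.eq_top_iff' _).2 fun x => ?_)
  induction x using TensorProduct.induction_on with
  | zero => exact zero_mem _
  | tmul a b =>
    have hb : (1 : A) ⊗ₜ[k] b ∈
        (Set.range Algebra.TensorProduct.includeLeftRingHom).centralizer := by
      rintro _ ⟨a', rfl⟩
      simp [Algebra.TensorProduct.tmul_mul_tmul]
    rw [show a ⊗ₜ[k] b = Algebra.TensorProduct.includeLeftRingHom a * ((1 : A) ⊗ₜ[k] b) by
      simp [Algebra.TensorProduct.tmul_mul_tmul]]
    exact mul_mem (Subring.subset_closure (Or.inl ⟨a, rfl⟩)) (Subring.subset_closure (Or.inr hb))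
  | add x y hx hy => exact add_mem hx hy

theorem IsSemisimpleModule.of_isSimpleModule_tensorProduct_right [Module B U]
    (hB : ∀ (b : B) (x : U), ((1 : A) ⊗ₜ[k] b) • x = b • x) : IsSemisimpleModule B U := by
  have : IsScalarTower k B U := .of_algebraMap_smul fun c x => by
    rw [← hB, ← Algebra.TensorProduct.algebraMap_apply', algebraMap_smul]
  have : IsArtinian B U := isArtinian_of_tower k inferInstance
  refine .of_isFullyInvariant_eq_bot_or_top fun N hN => hN.eq_bot_or_eq_top
    (Algebra.TensorProduct.includeRight : B →ₐ[k] A ⊗[k] B).toRingHom hB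
    ((Subring.eq_top_iff' _).2 fun x => ?_)
  induction x using TensorProduct.induction_on with
  | zero => exact zero_mem _
  | tmul a b =>
    have ha : a ⊗ₜ[k] (1 : B) ∈
        (Set.range Algebra.TensorProduct.includeRight.toRingHom).centralizer := by
      rintro _ ⟨b', rfl⟩
      simp [Algebra.TensorProduct.tmul_mul_tmul]
    rw [show a ⊗ₜ[k] b = Algebra.TensorProduct.includeRight b * (a ⊗ₜ[k] (1 : B)) by
      simp [Algebra.TensorProduct.tmul_mul_tmul]]
    exact mul_mem (Subring.subset_closure (Or.inl ⟨b, rfl⟩)) (Subring.subset_closure (Or.inr ha))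
  | add x y hx hy => exact add_mem hx hy

end Restriction

section Jacobson

variable {k A B M N : Type*} [Field k] [Ring A] [Algebra k A] [Ring B] [Algebra k B]
  [AddCommGroup M] [Module k M] [Module A M] [IsScalarTower k A M] [Module.Finite k M]
  [AddCommGroup N] [Module k N] [Module B N] [Module.Finite k N]
  [Module (A ⊗[k] B) (M ⊗[k] N)]

theorem tmul_mem_jacobson_of_mem_jacobson_left
    (hact : ∀ (a : A) (b : B) (m : M) (n : N),
      (a ⊗ₜ[k] b) • (m ⊗ₜ[k] n) = (a • m) ⊗ₜ[k] (b • n))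
    {m : M} (hm : m ∈ Module.jacobson A M) (n : N) :
    m ⊗ₜ[k] n ∈ Module.jacobson (A ⊗[k] B) (M ⊗[k] N) := by
  have := isScalarTower_of_tmul_smul_tmul hact
  refine Submodule.mem_sInf.2 fun K hK => ?_
  have : IsSimpleModule (A ⊗[k] B) (M ⊗[k] N ⧸ K) := isSimpleModule_iff_isCoatom.2 hK
  let : Module A (M ⊗[k] N ⧸ K) :=
    .compHom _ (Algebra.TensorProduct.includeLeftRingHom (R := k) (B := B))
  have hA : ∀ (a : A) (x : M ⊗[k] N ⧸ K), (a ⊗ₜ[k] (1 : B)) • x = a • x := fun _ _ => rfl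
  have := IsSemisimpleModule.of_isSimpleModule_tensorProduct_left hA
  let ψ : M →ₗ[A] M ⊗[k] N ⧸ K :=
    { toFun := fun m => K.mkQ (m ⊗ₜ n)
      map_add' := by simp [add_tmul]
      map_smul' := fun a m => by
        rw [RingHom.id_apply, ← one_smul B n, ← hact, one_smul, map_smul, hA] }
  simpa [ψ] using IsSemisimpleModule.jacobson_le_ker _ _ _ _ ψ hm

theorem tmul_mem_jacobson_of_mem_jacobson_right
    (hact : ∀ (a : A) (b : B) (m : M) (n : N),
      (a ⊗ₜ[k] b) • (m ⊗ₜ[k] n) = (a • m) ⊗ₜ[k] (b • n))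
    (m : M) {n : N} (hn : n ∈ Module.jacobson B N) :
    m ⊗ₜ[k] n ∈ Module.jacobson (A ⊗[k] B) (M ⊗[k] N) := by
  have := isScalarTower_of_tmul_smul_tmul hact
  refine Submodule.mem_sInf.2 fun K hK => ?_
  have : IsSimpleModule (A ⊗[k] B) (M ⊗[k] N ⧸ K) := isSimpleModule_iff_isCoatom.2 hK
  let : Module B (M ⊗[k] N ⧸ K) :=
    .compHom _ (Algebra.TensorProduct.includeRight : B →ₐ[k] A ⊗[k] B).toRingHom
  have hB : ∀ (b : B) (x : M ⊗[k] N ⧸ K), ((1 : A) ⊗ₜ[k] b) • x = b • x := fun _ _ => rfl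
  have := IsSemisimpleModule.of_isSimpleModule_tensorProduct_right hB
  let ψ : N →ₗ[B] M ⊗[k] N ⧸ K :=
    { toFun := fun n => K.mkQ (m ⊗ₜ n)
      map_add' := by simp [tmul_add]
      map_smul' := fun b n => by
        rw [RingHom.id_apply, ← one_smul A m, ← hact, one_smul, map_smul, hB] }
  simpa [ψ] using IsSemisimpleModule.jacobson_le_ker _ _ _ _ ψ hn

theorem TensorProduct.mem_jacobson_of_map_eq_zero {S T : Type*} [AddCommGroup S] [Module k S]
    [AddCommGroup T] [Module k T]
    (hact : ∀ (a : A) (b : B) (m : M) (n : N),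
      (a ⊗ₜ[k] b) • (m ⊗ₜ[k] n) = (a • m) ⊗ₜ[k] (b • n))
    {f : M →ₗ[k] S} {g : N →ₗ[k] T} (hf : Function.Surjective f) (hg : Function.Surjective g)
    (hfJ : ∀ m, f m = 0 → m ∈ Module.jacobson A M)
    (hgJ : ∀ n, g n = 0 → n ∈ Module.jacobson B N)
    {z : M ⊗[k] N} (hz : map f g z = 0) : z ∈ Module.jacobson (A ⊗[k] B) (M ⊗[k] N) := by
  have hzker : z ∈ LinearMap.ker (map f g) := hz
  rw [TensorProduct.map_ker (LinearMap.exact_subtype_ker_map f) hf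
    (LinearMap.exact_subtype_ker_map g) hg] at hzker
  have hl : ∀ x, LinearMap.lTensor M (LinearMap.ker g).subtype x ∈
      Module.jacobson (A ⊗[k] B) (M ⊗[k] N) := fun x => by
    induction x using TensorProduct.induction_on with
    | zero => simp
    | tmul m n => exact tmul_mem_jacobson_of_mem_jacobson_right hact m (hgJ n n.2)
    | add x x' hx hx' => rw [map_add]; exact add_mem hx hx'
  have hr : ∀ y, LinearMap.rTensor N (LinearMap.ker f).subtype y ∈
      Module.jacobson (A ⊗[k] B) (M ⊗[k] N) := fun y => by
    induction y using TensorProduct.induction_on with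
    | zero => simp
    | tmul m n => exact tmul_mem_jacobson_of_mem_jacobson_left hact (hfJ m m.2) n
    | add y y' hy hy' => rw [map_add]; exact add_mem hy hy'
  obtain ⟨_, ⟨x, rfl⟩, _, ⟨y, rfl⟩, rfl⟩ := Submodule.mem_sup.1 hzker
  exact add_mem (hl x) (hr y)

end Jacobson

theorem projective_cover_tensorProduct_general
    (k : Type u) [Field k]
    (A : Type v) [Ring A] [Algebra k A] [FiniteDimensional k A]
    (B : Type v) [Ring B] [Algebra k B] [FiniteDimensional k B]
    (S : Type v) [AddCommGroup S] [Module k S] [Module A S] [IsScalarTower k A S]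
    (hS : IsSimpleModule A S)
    (T : Type v) [AddCommGroup T] [Module k T] [Module B T] [IsScalarTower k B T]
    (hT : IsSimpleModule B T)
    (P : Type v) [AddCommGroup P] [Module k P] [Module A P] [IsScalarTower k A P]
    (hP : Module.Projective A P) (f : P →ₗ[A] S) (hfsurj : Function.Surjective f)
    (hfsmall : ∀ K : Submodule A P, LinearMap.ker f ⊔ K = ⊤ → K = ⊤)
    (Q : Type v) [AddCommGroup Q] [Module k Q] [Module B Q] [IsScalarTower k B Q]
    (hQ : Module.Projective B Q) (g : Q →ₗ[B] T) (hgsurj : Function.Surjective g)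
    (hgsmall : ∀ K : Submodule B Q, LinearMap.ker g ⊔ K = ⊤ → K = ⊤)
    [Module (A ⊗[k] B) (S ⊗[k] T)]
    (hactST : ∀ (a : A) (b : B) (s : S) (t : T),
      (a ⊗ₜ[k] b : A ⊗[k] B) • (s ⊗ₜ[k] t : S ⊗[k] T) = (a • s) ⊗ₜ[k] (b • t))
    [Module (A ⊗[k] B) (P ⊗[k] Q)]
    (hactPQ : ∀ (a : A) (b : B) (p : P) (q : Q),
      (a ⊗ₜ[k] b : A ⊗[k] B) • (p ⊗ₜ[k] q : P ⊗[k] Q) = (a • p) ⊗ₜ[k] (b • q)) :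
    Module.Projective (A ⊗[k] B) (P ⊗[k] Q)
    ∧ ∃ F : (P ⊗[k] Q) →ₗ[A ⊗[k] B] (S ⊗[k] T),
        (∀ (p : P) (q : Q), F (p ⊗ₜ[k] q) = f p ⊗ₜ[k] g q)
        ∧ Function.Surjective F
        ∧ ∀ K : Submodule (A ⊗[k] B) (P ⊗[k] Q), LinearMap.ker F ⊔ K = ⊤ → K = ⊤ := by
  have := hS; have := hT
  have := hP; have := hQ
  have : Module.Finite A P := .of_isSuperfluous_ker f hfsurj hfsmall
  have : Module.Finite B Q := .of_isSuperfluous_ker g hgsurj hgsmall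
  have : Module.Finite k P := .trans A P
  have : Module.Finite k Q := .trans B Q
  have := isScalarTower_of_tmul_smul_tmul hactPQ
  have : IsNoetherian (A ⊗[k] B) (P ⊗[k] Q) := isNoetherian_of_tower k inferInstance
  let F : P ⊗[k] Q →ₗ[A ⊗[k] B] S ⊗[k] T :=
    .ofTmulSMul (map (f.restrictScalars k) (g.restrictScalars k)) fun a b p q => by
      simp [hactPQ, hactST]
  refine ⟨.tensorProduct_of_tmul_smul_tmul hactPQ, F, fun _ _ => rfl,
    map_surjective hfsurj hgsurj, Submodule.isSuperfluous_of_le_jacobson fun z hz => ?_⟩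
  exact mem_jacobson_of_map_eq_zero (f := f.restrictScalars k) (g := g.restrictScalars k) hactPQ
    hfsurj hgsurj (fun _ hp => Submodule.IsSuperfluous.le_jacobson hfsmall hp)
    (fun _ hq => Submodule.IsSuperfluous.le_jacobson hgsmall hq) hz

/-- Let `k` be an algebraically closed field of characteristic zero and let
`A`, `B` be finite-dimensional `k`-algebras.  Let `S` be a simple left `A`-module with
projective cover `f : P → S`, and `T` a simple left `B`-module with projective cover
`g : Q → T`.  Then `P ⊗[k] Q` (an `A ⊗[k] B`-module via
`(a ⊗ b) • (p ⊗ q) = (a • p) ⊗ (b • q)`) is a projective cover of the simple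
`A ⊗[k] B`-module `S ⊗[k] T`, via the map `f ⊗ g`. -/
theorem projective_cover_tensorProduct
    (k : Type u) [Field k] [IsAlgClosed k] [CharZero k]
    (A : Type v) [Ring A] [Algebra k A] [FiniteDimensional k A]
    (B : Type v) [Ring B] [Algebra k B] [FiniteDimensional k B]
    (S : Type v) [AddCommGroup S] [Module k S] [Module A S] [IsScalarTower k A S]
    (hS : IsSimpleModule A S)
    (T : Type v) [AddCommGroup T] [Module k T] [Module B T] [IsScalarTower k B T]
    (hT : IsSimpleModule B T)
    (P : Type v) [AddCommGroup P] [Module k P] [Module A P] [IsScalarTower k A P]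
    (hP : Module.Projective A P) (f : P →ₗ[A] S) (hfsurj : Function.Surjective f)
    (hfsmall : ∀ K : Submodule A P, LinearMap.ker f ⊔ K = ⊤ → K = ⊤)
    (Q : Type v) [AddCommGroup Q] [Module k Q] [Module B Q] [IsScalarTower k B Q]
    (hQ : Module.Projective B Q) (g : Q →ₗ[B] T) (hgsurj : Function.Surjective g)
    (hgsmall : ∀ K : Submodule B Q, LinearMap.ker g ⊔ K = ⊤ → K = ⊤)
    [Module (A ⊗[k] B) (S ⊗[k] T)]
    (hactST : ∀ (a : A) (b : B) (s : S) (t : T),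
      (a ⊗ₜ[k] b : A ⊗[k] B) • (s ⊗ₜ[k] t : S ⊗[k] T) = (a • s) ⊗ₜ[k] (b • t))
    [Module (A ⊗[k] B) (P ⊗[k] Q)]
    (hactPQ : ∀ (a : A) (b : B) (p : P) (q : Q),
      (a ⊗ₜ[k] b : A ⊗[k] B) • (p ⊗ₜ[k] q : P ⊗[k] Q) = (a • p) ⊗ₜ[k] (b • q)) :
    Module.Projective (A ⊗[k] B) (P ⊗[k] Q)
    ∧ ∃ F : (P ⊗[k] Q) →ₗ[A ⊗[k] B] (S ⊗[k] T),
        (∀ (p : P) (q : Q), F (p ⊗ₜ[k] q) = f p ⊗ₜ[k] g q)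
        ∧ Function.Surjective F
        ∧ ∀ K : Submodule (A ⊗[k] B) (P ⊗[k] Q), LinearMap.ker F ⊔ K = ⊤ → K = ⊤ :=
  projective_cover_tensorProduct_general k A B S hS T hT P hP f hfsurj hfsmall Q hQ g hgsurj hgsmall
    hactST hactPQ
end

section
/- Let H be a finite-dimensional Hopf algebra over a field k and λ ∈ H^* a nonzero right cointegral. Then the k-linear map H → H^* sending h to the functional x ↦ λ(h x) is bijective. -/
universe u v

/-- A right cointegral on a Hopf algebra `H`: a linear functional `λ` with
`(id_H ⊗ λ) ∘ Δ = η ∘ λ`, i.e. `∑ h₍₁₎ λ(h₍₂₎) = λ(h) · 1` for all `h`. -/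
def IsRightCointegral (k : Type u) [Field k] (H : Type v) [Ring H] [HopfAlgebra k H]
    (fl : Module.Dual k H) : Prop :=
  ∀ h : H, (TensorProduct.rid k H) ((LinearMap.lTensor H fl)
      (Coalgebra.comul (R := k) h)) = fl h • (1 : H)

/-!
Suppose `λ(y h) = 0` for all `y`. The map `B v = ∑ h₍₁₎ λ(v h₍₂₎)` satisfies
`∑ y₍₁₎ B(y₍₂₎) = (id ⊗ λ) Δ(y h) = λ(y h) · 1 = 0`, i.e. `id ∗ B = 0` in the convolution algebra,
and `id` is convolution-invertible with inverse `S`, so `B = 0`. Writing `Δ h = ∑ bᵢ ⊗ hᵢ` along a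
basis, this says that every `hᵢ` again satisfies `λ(y hᵢ) = 0` for all `y`. For such `h`,
`ε(h) λ(x) = ∑ λ(x S(bᵢ) hᵢ) = 0`, so `ε(h) = 0`; applied to the `hᵢ` this gives
`h = ∑ bᵢ ε(hᵢ) = 0`. Thus `h ↦ λ(· h)` is injective, so `h ↦ λ(h ·)` is surjective onto `H^*`,
and bijective by counting dimensions.
-/

open Coalgebra TensorProduct WithConv

noncomputable def Coalgebra.Repr.ofBasis {R A ι : Type*} [CommSemiring R] [AddCommMonoid A]
    [Module R A] [CoalgebraStruct R A] (b : Module.Basis ι R A) (a : A) : Repr R a ι :=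
  haveI := Classical.decEq ι
  { index := (equivFinsuppOfBasisLeft b (comul a)).support
    left := b
    right := equivFinsuppOfBasisLeft b (comul a)
    eq := by
      conv_rhs => rw [← (equivFinsuppOfBasisLeft b).symm_apply_apply (comul a)]
      rw [equivFinsuppOfBasisLeft_symm_apply, Finsupp.sum] }

lemma LinearMap.isUnit_toConv_id {R C : Type*} [CommSemiring R] [Semiring C] [HopfAlgebra R C] :
    IsUnit (toConv (LinearMap.id : C →ₗ[R] C)) :=
  ⟨⟨_, _, id_mul_antipode, antipode_mul_id⟩, rfl⟩

namespace IsRightCointegral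

variable {k : Type u} [Field k] {H : Type v} [Ring H] [HopfAlgebra k H] {fl : Module.Dual k H}

lemma sum_smul_left (hcoint : IsRightCointegral k H fl) {h : H} {ι : Type*} (𝓡 : Repr k h ι) :
    ∑ i ∈ 𝓡.index, fl (𝓡.right i) • 𝓡.left i = fl h • 1 := by
  simpa [← 𝓡.eq, map_sum] using hcoint h

lemma sum_smul_left_eq_zero (hcoint : IsRightCointegral k H fl) {h : H}
    (hh : ∀ y, fl (y * h) = 0) {ι : Type*} (𝓡 : Repr k h ι) (v : H) :
    ∑ i ∈ 𝓡.index, fl (v * 𝓡.right i) • 𝓡.left i = 0 := by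
  let B : H →ₗ[k] H :=
    ∑ i ∈ 𝓡.index, (fl ∘ₗ LinearMap.mulRight k (𝓡.right i)).smulRight (𝓡.left i)
  have hB : toConv LinearMap.id * toConv B = 0 := by
    ext y
    rw [(ℛ k y).convMul_apply]
    have hyh := hcoint.sum_smul_left ((ℛ k y).mul 𝓡)
    rw [hh, zero_smul, Repr.mul_index, Finset.sum_product] at hyh
    simpa [B, Finset.mul_sum, mul_smul_comm] using hyh
  have hB' := congrArg ofConv (LinearMap.isUnit_toConv_id.mul_right_eq_zero.mp hB)
  simpa [B] using congr($hB' v)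

lemma mul_ofBasis_right_eq_zero (hcoint : IsRightCointegral k H fl) {h : H}
    (hh : ∀ y, fl (y * h) = 0) {ι : Type*} (b : Module.Basis ι k H) (i : ι) (v : H) :
    fl (v * (Repr.ofBasis b h).right i) = 0 := by
  by_cases hi : i ∈ (Repr.ofBasis b h).index
  · exact linearIndependent_iff'.mp b.linearIndependent _ _
      (hcoint.sum_smul_left_eq_zero hh (Repr.ofBasis b h) v) i hi
  · have hzero : (Repr.ofBasis b h).right i = 0 := Finsupp.notMem_support_iff.mp hi
    rw [hzero, mul_zero, map_zero]

lemma counit_eq_zero (hcoint : IsRightCointegral k H fl) (hfl : fl ≠ 0) {h : H}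
    (hh : ∀ y, fl (y * h) = 0) : counit (R := k) h = 0 := by
  obtain ⟨x, hx⟩ : ∃ x, fl x ≠ 0 := by
    by_contra! hall
    exact hfl (LinearMap.ext hall)
  let 𝓡 := Repr.ofBasis (Module.Basis.ofVectorSpace k H) h
  have hzero : fl (x * (counit (R := k) h • 1)) = 0 := by
    rw [← HopfAlgebra.sum_antipode_mul_eq_smul 𝓡, Finset.mul_sum, map_sum]
    refine Finset.sum_eq_zero fun i _ => ?_
    rw [← mul_assoc]
    exact hcoint.mul_ofBasis_right_eq_zero hh _ i _
  rw [mul_smul_comm, mul_one, map_smul, smul_eq_mul] at hzero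
  exact (mul_eq_zero.mp hzero).resolve_right hx

lemma eq_zero_of_forall_mul_eq_zero (hcoint : IsRightCointegral k H fl) (hfl : fl ≠ 0) {h : H}
    (hh : ∀ y, fl (y * h) = 0) : h = 0 := by
  let 𝓡 := Repr.ofBasis (Module.Basis.ofVectorSpace k H) h
  have hlegs : ∀ i, counit (R := k) (𝓡.right i) = 0 := fun i =>
    hcoint.counit_eq_zero hfl (hcoint.mul_ofBasis_right_eq_zero hh _ i)
  simpa [hlegs] using congrArg (TensorProduct.rid k H) (sum_tmul_counit_eq 𝓡).symm

end IsRightCointegral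

/-- Let `H` be a finite-dimensional Hopf algebra over a field `k` and
`λ ∈ H^*` a nonzero right cointegral.  Then the `k`-linear map `H → H^*` sending `h` to the
functional `x ↦ λ(h x)` is bijective. -/
theorem cointegral_pairing_bijective
    (k : Type u) [Field k] (H : Type v) [Ring H] [HopfAlgebra k H] [FiniteDimensional k H]
    (fl : Module.Dual k H) (hfl : fl ≠ 0) (hcoint : IsRightCointegral k H fl) :
    Function.Bijective (fun h : H => fl ∘ₗ LinearMap.mulLeft k h) := by
  let B : H →ₗ[k] H →ₗ[k] k := (LinearMap.mul k H).compr₂ fl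
  have hflip : Function.Injective B.flip := by
    rw [injective_iff_map_eq_zero]
    exact fun h hh => hcoint.eq_zero_of_forall_mul_eq_zero hfl fun y => congr($hh y)
  have hsurj : Function.Surjective B := LinearMap.flip_injective_iff₁.mp hflip
  have hdim : Module.finrank k H = Module.finrank k (Module.Dual k H) :=
    Subspace.dual_finrank_eq.symm
  exact ⟨(LinearMap.injective_iff_surjective_of_finrank_eq_finrank hdim).mpr hsurj, hsurj⟩
end

section
/- Let H be a finite-dimensional Hopf algebra over a field k, Λ ∈ H a nonzero left integral and λ ∈ H^* a nonzero right cointegral. Then λ(Λ) ≠ 0; in particular, after rescaling one may normalize λ(Λ) = 1. -/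
/-!
Let `N = {h | λ(x h) = 0 for all x}`; a left integral `Λ` with `λ(Λ) = 0` lies in `N`, since
`λ(x Λ) = ε(x) λ(Λ)`, so it suffices to show `N = 0`. Clearly `N` is a left ideal, and `1 ∉ N`
because `λ ≠ 0`. The cointegral identity `∑ h₁ λ(x h₂) = ∑ S(x₁) λ(x₂ h)` shows that `N` is
moreover a left coideal, `Δ N ⊆ H ⊗ N`. For `n ∈ N` this gives `ε(n) 1 = ∑ S(n₁) n₂ ∈ N`, hence
`ε` vanishes on `N`, and then `n = ∑ n₁ ε(n₂) = 0`.
-/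

universe u v

open scoped TensorProduct
open Coalgebra HopfAlgebra

namespace TensorProduct

variable {R M N ι : Type*} [CommSemiring R] [AddCommMonoid M] [Module R M] [Module.Free R M]
  [AddCommMonoid N] [Module R N]

theorem mem_range_lTensor_iInf_ker (g : ι → Module.Dual R N) (t : M ⊗[R] N)
    (ht : ∀ i, (g i).lTensor M t = 0) :
    t ∈ LinearMap.range ((⨅ i, LinearMap.ker (g i)).subtype.lTensor M) := by
  classical
  let b := Module.Free.chooseBasis R M
  obtain ⟨c, rfl⟩ := eq_repr_basis_left b t
  have hc : ∀ j, c j ∈ ⨅ i, LinearMap.ker (g i) := by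
    simp only [Submodule.mem_iInf, LinearMap.mem_ker]
    intro j i
    have := sum_tmul_basis_left_eq_zero b (c.mapRange (g i) (map_zero _)) (by
      rw [Finsupp.sum_mapRange_index fun _ => tmul_zero _ _]
      simpa [Finsupp.sum] using ht i)
    simpa using congr($this j)
  exact ⟨∑ j ∈ c.support, b j ⊗ₜ ⟨c j, hc j⟩, by simp [Finsupp.sum]⟩

end TensorProduct

namespace HopfAlgebra

variable {k H : Type*} [Field k] [Semiring H] [HopfAlgebra k H]

theorem eq_bot_of_mul_mem_of_comul_mem (N : Submodule k H) (hmul : ∀ a, ∀ n ∈ N, a * n ∈ N)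
    (hcomul : ∀ n ∈ N, comul n ∈ LinearMap.range (N.subtype.lTensor H)) (hone : (1 : H) ∉ N) :
    N = ⊥ := by
  have hε : ∀ n ∈ N, counit (R := k) n = 0 := by
    intro n hn
    obtain ⟨t, ht⟩ := hcomul n hn
    have hmem : counit (R := k) n • (1 : H) ∈ N := by
      have hS : ∀ t, LinearMap.mul' k H (TensorProduct.map (antipode k) N.subtype t) ∈ N := by
        intro t
        induction t with
        | zero => simp
        | tmul a m => simpa using hmul _ m m.2
        | add s u hs hu => simpa using N.add_mem hs hu
      rw [← Algebra.algebraMap_eq_smul_one, ← mul_antipode_rTensor_comul_apply, ← ht]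
      simpa [← LinearMap.rTensor_comp_lTensor] using hS t
    by_contra hne
    exact hone (by simpa [smul_smul, hne] using N.smul_mem (counit (R := k) n)⁻¹ hmem)
  rw [eq_bot_iff]
  intro n hn
  obtain ⟨t, ht⟩ := hcomul n hn
  have hε' : counit ∘ₗ N.subtype = 0 := LinearMap.ext fun m => hε m m.2
  have : n ⊗ₜ[k] (1 : k) = 0 := by
    rw [← lTensor_counit_comul, ← ht, ← LinearMap.lTensor_comp_apply, hε']
    simp
  simpa using congr(TensorProduct.rid k H $this)

end HopfAlgebra

namespace IsRightCointegral

variable {k H ι κ : Type*} [Field k] [Ring H] [HopfAlgebra k H] {fl : Module.Dual k H}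

theorem sum_mul_sum_smul_eq (hfl : IsRightCointegral k H fl) {y h : H} (ry : Repr k y ι)
    (rh : Repr k h κ) :
    ∑ i ∈ ry.index, ry.left i * ∑ j ∈ rh.index, fl (ry.right i * rh.right j) • rh.left j =
      fl (y * h) • 1 := by
  have hcomul : comul (R := k) (y * h) = ∑ i ∈ ry.index, ∑ j ∈ rh.index,
      (ry.left i * rh.left j) ⊗ₜ[k] (ry.right i * rh.right j) := by
    rw [Bialgebra.comul_mul, ← ry.eq, ← rh.eq, Finset.sum_mul_sum]
    simp [Algebra.TensorProduct.tmul_mul_tmul]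
  simpa [hcomul, map_sum, Finset.mul_sum] using hfl (y * h)

theorem sum_apply_mul_smul_eq_sum_smul_antipode (hfl : IsRightCointegral k H fl) {x h : H} (rx : Repr k x ι)
    (rh : Repr k h κ) :
    ∑ j ∈ rh.index, fl (x * rh.right j) • rh.left j =
      ∑ i ∈ rx.index, fl (rx.right i * h) • antipode k (rx.left i) := by
  let K : H →ₗ[k] H :=
    ∑ j ∈ rh.index, (fl ∘ₗ LinearMap.mulRight k (rh.right j)).smulRight (rh.left j)
  have hK (c : H) : K c = ∑ j ∈ rh.index, fl (c * rh.right j) • rh.left j := by simp [K]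
  let Φ : H ⊗[k] (H ⊗[k] H) →ₗ[k] H := LinearMap.mul' k H ∘ₗ
    TensorProduct.map (LinearMap.mul' k H ∘ₗ (antipode k).rTensor H) K ∘ₗ
    (TensorProduct.assoc k H H H).symm.toLinearMap
  have hΦ (a b c : H) : Φ (a ⊗ₜ (b ⊗ₜ c)) = antipode k a * b * K c := by simp [Φ]
  have coassoc := congr(Φ $(sum_tmul_tmul_eq rx (fun i => ℛ k (rx.left i))
    (fun i => ℛ k (rx.right i))))
  simp only [map_sum, hΦ] at coassoc
  calc _ = K x := (hK x).symm
    _ = ∑ i ∈ rx.index, ∑ j ∈ (ℛ k (rx.left i)).index,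
          antipode k ((ℛ k (rx.left i)).left j) * (ℛ k (rx.left i)).right j * K (rx.right i) := by
        simp only [← Finset.sum_mul, sum_antipode_mul_eq_smul, smul_one_mul, ← map_smul,
          ← map_sum, sum_counit_smul]
    _ = ∑ i ∈ rx.index, ∑ j ∈ (ℛ k (rx.right i)).index,
          antipode k (rx.left i) * (ℛ k (rx.right i)).left j * K ((ℛ k (rx.right i)).right j) :=
        coassoc
    _ = _ := by
        simp only [mul_assoc, ← Finset.mul_sum, hK, hfl.sum_mul_sum_smul_eq, mul_smul_one]

theorem eq_zero_of_forall_apply_mul_eq_zero (hfl : IsRightCointegral k H fl) (hne : fl ≠ 0)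
    {h : H} (hh : ∀ x, fl (x * h) = 0) : h = 0 := by
  let N := ⨅ x : H, LinearMap.ker (fl ∘ₗ LinearMap.mulLeft k x)
  have mem_N (n : H) : n ∈ N ↔ ∀ x, fl (x * n) = 0 := by simp [N]
  have hN : N = ⊥ := by
    refine eq_bot_of_mul_mem_of_comul_mem N (fun a n hn => ?_) (fun n hn => ?_)
      (fun hone => hne (LinearMap.ext fun x => by simpa using (mem_N 1).1 hone x))
    · rw [mem_N] at hn ⊢
      exact fun x => mul_assoc x a n ▸ hn (x * a)
    · refine TensorProduct.mem_range_lTensor_iInf_ker _ _ fun x => ?_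
      have := hfl.sum_apply_mul_smul_eq_sum_smul_antipode (ℛ k x) (ℛ k n)
      simp only [(mem_N n).1 hn, zero_smul, Finset.sum_const_zero] at this
      apply (TensorProduct.rid k H).injective
      simpa [← (ℛ k n).eq, map_sum] using this
  simpa [hN] using (mem_N h).2 hh

end IsRightCointegral

theorem cointegral_of_integral_ne_zero_general
    (k : Type u) [Field k] (H : Type v) [Ring H] [HopfAlgebra k H]
    (Λ : H) (hΛne : Λ ≠ 0)
    (hΛ : ∀ h : H, h * Λ = CoalgebraStruct.counit (R := k) h • Λ)
    (fl : Module.Dual k H) (hfl : fl ≠ 0) (hcoint : IsRightCointegral k H fl) :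
    fl Λ ≠ 0 := fun hzero =>
  hΛne <| hcoint.eq_zero_of_forall_apply_mul_eq_zero hfl fun x => by
    rw [hΛ x, map_smul, hzero, smul_zero]

/-- Let `H` be a finite-dimensional Hopf algebra over a field `k`,
`Λ ∈ H` a nonzero left integral and `λ ∈ H^*` a nonzero right cointegral.  Then
`λ(Λ) ≠ 0` (in particular, after rescaling one may normalize `λ(Λ) = 1`). -/
theorem cointegral_of_integral_ne_zero
    (k : Type u) [Field k] (H : Type v) [Ring H] [HopfAlgebra k H] [FiniteDimensional k H]
    (Λ : H) (hΛne : Λ ≠ 0)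
    (hΛ : ∀ h : H, h * Λ = CoalgebraStruct.counit (R := k) h • Λ)
    (fl : Module.Dual k H) (hfl : fl ≠ 0) (hcoint : IsRightCointegral k H fl) :
    fl Λ ≠ 0 :=
  cointegral_of_integral_ne_zero_general k H Λ hΛne hΛ fl hfl hcoint
end

section
/- Let H be a finite-dimensional Hopf algebra over a field k. Then the space of left integrals of H, i.e. the subspace { Λ ∈ H : hΛ = ε(h)Λ for all h ∈ H }, is one-dimensional. -/
/-!
The dual `H*` acts on `H` by `f ⇀ n = ∑ f (S n₂) • n₁`, and left multiplication by `H`, read through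
a basis `bᵢ` with dual basis `bᵢ*`, is a coaction of `H*`. Together they make `H` a Hopf module
over `H*` whose coinvariants are exactly the left integrals, and the fundamental theorem of Hopf
modules can be made explicit: `P m = ∑ᵢ (bᵢ* ∘ S) ⇀ (bᵢ m)` projects `H` onto the integrals, and
`m ↦ (x ↦ P (x m))` is an isomorphism `H ≃ Hom(H, ∫)` with inverse `φ ↦ ∑ⱼ bⱼ* ⇀ φ (bⱼ)`.
Hence `dim H = dim H · dim ∫`.
-/

universe u v

/-- The space of left integrals of a Hopf algebra `H` over `k`:
the `k`-subspace `{ Λ ∈ H : hΛ = ε(h)Λ for all h ∈ H }`. -/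
def leftIntegrals (k : Type u) [Field k] (H : Type v) [Ring H] [HopfAlgebra k H] :
    Submodule k H where
  carrier := {Λ : H | ∀ h : H, h * Λ = CoalgebraStruct.counit (R := k) h • Λ}
  add_mem' := by
    intro a b ha hb h
    rw [mul_add, ha h, hb h, smul_add]
  zero_mem' := by
    intro h
    rw [mul_zero, smul_zero]
  smul_mem' := by
    intro c a ha h
    rw [mul_smul_comm, ha h, smul_comm]

open Coalgebra HopfAlgebra TensorProduct

section Coalgebra

variable {R A : Type*} [CommSemiring R] [AddCommMonoid A] [Module R A] [Coalgebra R A]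

lemma Coalgebra.sum_counit_right_smul {ι : Type*} {a : A} (r : Repr R a ι) :
    ∑ i ∈ r.index, counit (R := R) (r.right i) • r.left i = a := by
  simpa only [map_sum, TensorProduct.lift.tmul, LinearMap.flip_apply, LinearMap.lsmul_apply,
    one_smul] using congr(TensorProduct.lift (LinearMap.lsmul R A).flip
      $(sum_tmul_counit_eq (R := R) r))

end Coalgebra

namespace Module.Basis

variable {ι R M V : Type*} [Fintype ι] [CommSemiring R] [AddCommMonoid M] [Module R M]
  [AddCommMonoid V] [Module R V] (b : Basis ι R M)

lemma sum_coord_smul_apply (F : M →ₗ[R] V) (x : M) : ∑ i, b.coord i x • F (b i) = F x := by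
  simp_rw [← map_smul, ← map_sum, coord_apply, b.sum_repr]

lemma sum_apply_coord_comp (Φ : Module.Dual R M →ₗ[R] M →ₗ[R] V) (A : M →ₗ[R] M) :
    ∑ i, Φ (b.coord i ∘ₗ A) (b i) = ∑ i, Φ (b.coord i) (A (b i)) := by
  conv_lhs => enter [2, i]; rw [← b.sum_dual_apply_smul_coord (b.coord i ∘ₗ A)]
  simp only [map_sum, map_smul, LinearMap.sum_apply, LinearMap.smul_apply, LinearMap.comp_apply]
  rw [Finset.sum_comm]
  simp only [b.sum_coord_smul_apply]

end Module.Basis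

namespace HopfAlgebra

variable {R H : Type*} [CommSemiring R] [Semiring H] [HopfAlgebra R H]

noncomputable def dualAct : Module.Dual R H →ₗ[R] H →ₗ[R] H :=
  LinearMap.mk₂ R (fun f n ↦ TensorProduct.rid R H ((f ∘ₗ antipode R).lTensor H (comul n)))
    (fun _ _ _ ↦ by simp [LinearMap.add_comp, LinearMap.lTensor_add])
    (fun _ _ _ ↦ by simp [LinearMap.smul_comp, LinearMap.lTensor_smul])
    (fun _ _ _ ↦ by simp)
    (fun _ _ _ ↦ by simp)

lemma dualAct_apply {ι : Type*} (f : Module.Dual R H) {n : H} (r : Repr R n ι) :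
    dualAct f n = ∑ i ∈ r.index, f (antipode R (r.right i)) • r.left i := by
  simp [dualAct, ← r.eq, map_sum]

lemma sum_tmul_antipode_mul_eq {ι κ : Type*} {h : H} (r : Repr R h ι)
    (r₁ : ∀ i, Repr R (r.left i) κ) :
    ∑ i ∈ r.index, ∑ j ∈ (r₁ i).index,
      (r₁ i).left j ⊗ₜ[R] (antipode R ((r₁ i).right j) * r.right i) = h ⊗ₜ[R] 1 := by
  have := congr((LinearMap.mul' R H ∘ₗ (antipode R).rTensor H).lTensor H
    $(sum_tmul_tmul_eq r r₁ fun i ↦ ℛ R (r.right i)))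
  simp only [map_sum, LinearMap.lTensor_tmul, LinearMap.comp_apply, LinearMap.rTensor_tmul,
    LinearMap.mul'_apply] at this
  simp only [this, ← tmul_sum, sum_antipode_mul_eq_smul, ← smul_tmul, ← sum_tmul,
    sum_counit_right_smul]

lemma mul_dualAct {ι : Type*} (f : Module.Dual R H) (n : H) {h : H} (r : Repr R h ι) :
    h * dualAct f n =
      ∑ i ∈ r.index, dualAct (f ∘ₗ LinearMap.mulRight R (r.right i)) (r.left i * n) := by
  let rn := ℛ R n
  have key (t : H × H) := congr(TensorProduct.rid R H
    (TensorProduct.map (LinearMap.mulRight R (rn.left t))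
      (f ∘ₗ LinearMap.mulLeft R (antipode R (rn.right t)))
    $(sum_tmul_antipode_mul_eq r fun i ↦ ℛ R (r.left i))))
  simp only [map_sum, TensorProduct.map_tmul, TensorProduct.rid_tmul, LinearMap.comp_apply,
    LinearMap.mulLeft_apply, LinearMap.mulRight_apply, mul_one] at key
  simp only [dualAct_apply _ ((ℛ R (r.left _)).mul rn), dualAct_apply f rn, Finset.mul_sum,
    mul_smul_comm, Repr.mul_index, Finset.sum_product, LinearMap.comp_apply,
    LinearMap.mulRight_apply, Repr.mul_left, Repr.mul_right, antipode_mul_antidistrib, mul_assoc]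
  simp only [← key]
  exact Finset.sum_comm.trans (Finset.sum_congr rfl fun _ _ ↦ Finset.sum_comm)

lemma mul_dualAct_of_mul_eq_counit_smul {Λ : H} (hΛ : ∀ g : H, g * Λ = counit (R := R) g • Λ)
    (f : Module.Dual R H) (h : H) :
    h * dualAct f Λ = dualAct (f ∘ₗ LinearMap.mulRight R h) Λ := by
  have hf : ∑ i ∈ (ℛ R h).index, counit (R := R) ((ℛ R h).left i) •
      (f ∘ₗ LinearMap.mulRight R ((ℛ R h).right i)) = f ∘ₗ LinearMap.mulRight R h := by
    ext y
    conv_rhs => rw [← sum_counit_smul (ℛ R h)]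
    simp [Finset.mul_sum]
  rw [mul_dualAct f Λ (ℛ R h), ← hf]
  simp only [hΛ, map_smul, LinearMap.map_sum₂, LinearMap.smul_apply]

lemma dualAct_dualAct {ι κ : Type*} (g f : Module.Dual R H) {n : H} (r : Repr R n ι)
    (r₂ : ∀ i, Repr R (r.right i) κ) :
    dualAct g (dualAct f n) = ∑ i ∈ r.index, ∑ j ∈ (r₂ i).index,
      (g (antipode R ((r₂ i).left j)) * f (antipode R ((r₂ i).right j))) • r.left i := by
  have key := congr(TensorProduct.rid R H (LinearMap.lTensor H
    (LinearMap.mul' R R ∘ₗ TensorProduct.map (g ∘ₗ antipode R) (f ∘ₗ antipode R))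
    $(sum_tmul_tmul_eq r (fun i ↦ ℛ R (r.left i)) r₂)))
  simp only [map_sum, LinearMap.lTensor_tmul, LinearMap.comp_apply, TensorProduct.map_tmul,
    LinearMap.mul'_apply, TensorProduct.rid_tmul] at key
  rw [← key, dualAct_apply f r, map_sum]
  simp only [map_smul, dualAct_apply g (ℛ R (r.left _)), Finset.smul_sum, smul_smul, mul_comm]

variable {ι : Type*} [Fintype ι]

noncomputable def integralProj (b : Module.Basis ι R H) : H →ₗ[R] H :=
  ∑ i, dualAct (b.coord i ∘ₗ antipode R) ∘ₗ LinearMap.mulLeft R (b i)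

lemma integralProj_apply (b : Module.Basis ι R H) (m : H) :
    integralProj b m = ∑ i, dualAct (b.coord i ∘ₗ antipode R) (b i * m) := by
  simp [integralProj]

lemma mul_integralProj (b : Module.Basis ι R H) (h m : H) :
    h * integralProj b m = counit (R := R) h • integralProj b m := by
  have transpose (x y : H) := b.sum_apply_coord_comp
    ((dualAct ∘ₗ (antipode R).dualMap).compl₂ (LinearMap.mulLeft R x ∘ₗ LinearMap.mulRight R m))
    (LinearMap.mulLeft R (antipode R y))
  simp only [LinearMap.compl₂_apply, LinearMap.comp_apply, LinearMap.dualMap_apply',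
    LinearMap.mulLeft_apply, LinearMap.mulRight_apply] at transpose
  have hS (i : ι) (y : H) : (b.coord i ∘ₗ antipode R) ∘ₗ LinearMap.mulRight R y =
      (b.coord i ∘ₗ LinearMap.mulLeft R (antipode R y)) ∘ₗ antipode R := by
    ext; simp [antipode_mul_antidistrib]
  rw [integralProj_apply, Finset.mul_sum]
  simp only [mul_dualAct _ _ (ℛ R h), hS]
  rw [Finset.sum_comm, Finset.sum_congr rfl fun u _ ↦ transpose _ _, Finset.sum_comm,
    Finset.smul_sum]
  refine Finset.sum_congr rfl fun i _ ↦ ?_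
  rw [← map_smul, ← map_sum, ← one_mul (b i * m), ← smul_mul_assoc,
    ← sum_mul_antipode_eq_smul (ℛ R h), Finset.sum_mul]
  simp only [mul_assoc]

lemma sum_dualAct_coord_antipode_dualAct (b : Module.Basis ι R H) (g : Module.Dual R H)
    (n : H) : ∑ i, dualAct (b.coord i ∘ₗ antipode R)
      (dualAct (g ∘ₗ LinearMap.mulRight R (b i)) n) = g 1 • n := by
  let r := ℛ R n
  have collapse (y z : H) : ∑ i, b.coord i (antipode R (antipode R y)) *
      g (antipode R z * b i) = g (antipode R (antipode R y * z)) := by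
    simpa [antipode_mul_antidistrib] using
      b.sum_coord_smul_apply (g ∘ₗ LinearMap.mulLeft R (antipode R z)) (antipode R (antipode R y))
  have counit_eq (t : H × H) : ∑ s ∈ (ℛ R (r.right t)).index,
      g (antipode R (antipode R ((ℛ R (r.right t)).left s) * (ℛ R (r.right t)).right s)) =
      counit (R := R) (r.right t) * g 1 := by
    simpa [map_sum] using congr(g (antipode R $(sum_antipode_mul_eq_smul (ℛ R (r.right t)))))
  simp only [dualAct_dualAct _ _ r fun t ↦ ℛ R (r.right t), LinearMap.comp_apply,
    LinearMap.mulRight_apply]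
  rw [Finset.sum_comm]
  simp only [Finset.sum_comm (s := Finset.univ), ← Finset.sum_smul, collapse, counit_eq]
  simp only [mul_comm _ (g 1), ← smul_smul]
  rw [← Finset.smul_sum, sum_counit_right_smul]

lemma sum_dualAct_coord_dualAct_antipode (b : Module.Basis ι R H) (g : Module.Dual R H)
    (n : H) : ∑ i, dualAct (b.coord i)
      (dualAct ((g ∘ₗ LinearMap.mulRight R (b i)) ∘ₗ antipode R) n) = g 1 • n := by
  let r := ℛ R n
  have collapse (y z : H) : ∑ i, b.coord i (antipode R y) *
      g (antipode R (antipode R z) * b i) = g (antipode R (y * antipode R z)) := by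
    simpa [antipode_mul_antidistrib] using b.sum_coord_smul_apply
      (g ∘ₗ LinearMap.mulLeft R (antipode R (antipode R z))) (antipode R y)
  have counit_eq (t : H × H) : ∑ s ∈ (ℛ R (r.right t)).index,
      g (antipode R ((ℛ R (r.right t)).left s * antipode R ((ℛ R (r.right t)).right s))) =
      counit (R := R) (r.right t) * g 1 := by
    simpa [map_sum] using congr(g (antipode R $(sum_mul_antipode_eq_smul (ℛ R (r.right t)))))
  simp only [dualAct_dualAct _ _ r fun t ↦ ℛ R (r.right t), LinearMap.comp_apply,
    LinearMap.mulRight_apply]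
  rw [Finset.sum_comm]
  simp only [Finset.sum_comm (s := Finset.univ), ← Finset.sum_smul, collapse, counit_eq]
  simp only [mul_comm _ (g 1), ← smul_smul]
  rw [← Finset.smul_sum, sum_counit_right_smul]

lemma integralProj_mul_dualAct (b : Module.Basis ι R H) {Λ : H}
    (hΛ : ∀ g : H, g * Λ = counit (R := R) g • Λ) (f : Module.Dual R H) (x : H) :
    integralProj b (x * dualAct f Λ) = f x • Λ := by
  simp only [integralProj_apply, mul_dualAct_of_mul_eq_counit_smul hΛ]
  simpa using sum_dualAct_coord_antipode_dualAct b (f ∘ₗ LinearMap.mulRight R x) Λ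

lemma sum_dualAct_coord_integralProj (b : Module.Basis ι R H) (m : H) :
    ∑ j, dualAct (b.coord j) (integralProj b (b j * m)) = m := by
  have transpose (j : ι) := b.sum_apply_coord_comp
    (((dualAct ∘ₗ (antipode R).dualMap).compr₂ (dualAct (b.coord j))).compl₂
      (LinearMap.mulRight R m))
    (LinearMap.mulRight R (b j))
  simp only [LinearMap.compl₂_apply, LinearMap.compr₂_apply, LinearMap.comp_apply,
    LinearMap.dualMap_apply', LinearMap.mulRight_apply] at transpose
  simp only [integralProj_apply, map_sum, ← mul_assoc, ← transpose]
  rw [Finset.sum_comm]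
  simp only [sum_dualAct_coord_dualAct_antipode]
  simpa using b.sum_coord_smul_apply (LinearMap.mulRight R m) 1

end HopfAlgebra

section LeftIntegrals

variable {k H ι : Type*} [Field k] [Ring H] [HopfAlgebra k H] [Fintype ι]

lemma mem_leftIntegrals {Λ : H} :
    Λ ∈ leftIntegrals k H ↔ ∀ h : H, h * Λ = counit (R := k) h • Λ := Iff.rfl

lemma integralProj_mem_leftIntegrals (b : Module.Basis ι k H) (m : H) :
    integralProj b m ∈ leftIntegrals k H :=
  mem_leftIntegrals.2 fun h ↦ mul_integralProj b h m

noncomputable def equivLinearMapLeftIntegrals (b : Module.Basis ι k H) :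
    H ≃ₗ[k] (H →ₗ[k] leftIntegrals k H) :=
  .ofLinearMap
    ((LinearMap.mul k H).flip.compr₂
      ((integralProj b).codRestrict _ (integralProj_mem_leftIntegrals b)))
    (∑ j, dualAct (b.coord j) ∘ₗ (leftIntegrals k H).subtype ∘ₗ LinearMap.applyₗ (b j))
    (by
      ext φ x
      simpa [integralProj_mul_dualAct b (mem_leftIntegrals.1 (φ _).2)] using
        b.sum_coord_smul_apply ((leftIntegrals k H).subtype ∘ₗ φ) x)
    (by
      ext m
      simpa using sum_dualAct_coord_integralProj b m)

end LeftIntegrals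

/-- Let `H` be a finite-dimensional Hopf algebra over a field `k`.
Then the space of left integrals of `H` is one-dimensional. -/
theorem finrank_leftIntegrals_eq_one
    (k : Type u) [Field k] (H : Type v) [Ring H] [HopfAlgebra k H] [FiniteDimensional k H] :
    Module.finrank k (leftIntegrals k H) = 1 := by
  have : Nontrivial H := Bialgebra.nontrivial k
  have h := (equivLinearMapLeftIntegrals (Module.finBasis k H)).finrank_eq
  rw [Module.finrank_linearMap] at h
  exact (Nat.mul_eq_left Module.finrank_pos.ne').1 h.symm
end

section
/- Let H be a finite-dimensional Hopf algebra over a field k with antipode S, and let Λ ∈ H be a two-sided integral, i.e. hΛ = ε(h)Λ = Λh for all h ∈ H. Then S(Λ) = Λ. -/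
/-!
If `Λ` is a left integral, coassociativity and the antipode axiom give
`S(h) Λ₁ ⊗ Λ₂ = Λ₁ ⊗ h Λ₂` for every `h`. For `h = Λ`, since `Λ` is also a right integral, both
`S(Λ) Λ₁ ⊗ Λ₂` and `Λ Λ₁ ⊗ Λ₂` equal `Λ ⊗ Λ`. Finally `a ↦ a Λ₁ ⊗ Λ₂` is injective when
`Λ ≠ 0`: for a functional `f` with `f(Λ) ≠ 0`, the map `u ⊗ v ↦ u S(f ⇀ v)` sends `a Λ₁ ⊗ Λ₂` to
`f(Λ) a`, because `∑ Λ₁ S(f ⇀ Λ₂) = ε(f ⇀ Λ) = f(Λ)`.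
-/

open Coalgebra (Repr comul counit)
open scoped Coalgebra TensorProduct
open HopfAlgebra (antipode)

section Coalgebra

variable {R C ι : Type*} [CommSemiring R] [AddCommMonoid C] [Module R C] [Coalgebra R C]

lemma sum_counit_right_smul {a : C} (𝓡 : Repr R a ι) :
    ∑ i ∈ 𝓡.index, counit (R := R) (𝓡.right i) • 𝓡.left i = a := by
  simpa only [map_sum, TensorProduct.lift.tmul, LinearMap.lsmul_apply, LinearMap.flip_apply,
    one_smul] using congr(TensorProduct.lift (LinearMap.lsmul R C).flip
      $(Coalgebra.sum_tmul_counit_eq (R := R) 𝓡))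

/-- Sweedler's `f ⇀ x = ∑ x₁ f(x₂)`. -/
noncomputable def rightContract (f : C →ₗ[R] R) : C →ₗ[R] C :=
  (TensorProduct.rid R C).toLinearMap ∘ₗ f.lTensor C ∘ₗ comul

lemma rightContract_apply (f : C →ₗ[R] R) {x : C} (𝓡 : Repr R x ι) :
    rightContract f x = ∑ i ∈ 𝓡.index, f (𝓡.right i) • 𝓡.left i := by
  simp only [rightContract, LinearMap.comp_apply, ← 𝓡.eq, map_sum, LinearMap.lTensor_tmul,
    LinearEquiv.coe_coe, TensorProduct.rid_tmul]

lemma counit_rightContract (f : C →ₗ[R] R) (x : C) :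
    counit (R := R) (rightContract f x) = f x := by
  conv_rhs => rw [← Coalgebra.sum_counit_smul (ℛ R x)]
  simp only [rightContract_apply f (ℛ R x), map_sum, map_smul, smul_eq_mul, mul_comm]

lemma comul_rightContract (f : C →ₗ[R] R) {x : C} (𝓡 : Repr R x ι) :
    comul (R := R) (rightContract f x) =
      ∑ i ∈ 𝓡.index, 𝓡.left i ⊗ₜ rightContract f (𝓡.right i) := by
  let Θ : C ⊗[R] (C ⊗[R] C) →ₗ[R] C ⊗[R] C :=
    (TensorProduct.rid R (C ⊗[R] C)).toLinearMap ∘ₗ f.lTensor (C ⊗[R] C) ∘ₗ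
      (TensorProduct.assoc R C C C).symm.toLinearMap
  have hΘ (x y z : C) : Θ (x ⊗ₜ (y ⊗ₜ z)) = f z • (x ⊗ₜ y) := by
    simp [Θ, TensorProduct.assoc_symm_tmul]
  have coassoc := congrArg Θ
    (Coalgebra.sum_tmul_tmul_eq 𝓡 (fun i ↦ ℛ R (𝓡.left i)) fun i ↦ ℛ R (𝓡.right i))
  simp only [map_sum, hΘ] at coassoc
  simp_rw [rightContract_apply f 𝓡, map_sum, map_smul, ← (ℛ R (𝓡.left _)).eq, Finset.smul_sum,
    coassoc, rightContract_apply f (ℛ R (𝓡.right _)), TensorProduct.tmul_sum,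
    TensorProduct.tmul_smul]

end Coalgebra

section Bialgebra

variable {R A : Type*} [CommSemiring R] [Semiring A] [Bialgebra R A]

variable (R) in
def IsLeftIntegral (Λ : A) : Prop := ∀ h : A, h * Λ = counit (R := R) h • Λ

variable (R) in
def IsRightIntegral (Λ : A) : Prop := ∀ h : A, Λ * h = counit (R := R) h • Λ

lemma IsRightIntegral.one_tmul_mul_comul {Λ : A} (hΛ : IsRightIntegral R Λ) (x : A) :
    ((1 : A) ⊗ₜ[R] Λ) * comul x = x ⊗ₜ Λ := by
  let 𝓡 := ℛ R x
  conv_rhs => rw [← sum_counit_right_smul 𝓡]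
  simp only [← 𝓡.eq, Finset.mul_sum, Algebra.TensorProduct.tmul_mul_tmul, one_mul, hΛ _,
    TensorProduct.tmul_smul, ← TensorProduct.smul_tmul', TensorProduct.sum_tmul]

lemma IsRightIntegral.tmul_one_mul_comul {Λ : A} (hΛ : IsRightIntegral R Λ) (x : A) :
    (Λ ⊗ₜ[R] (1 : A)) * comul x = Λ ⊗ₜ x := by
  let 𝓡 := ℛ R x
  conv_rhs => rw [← Coalgebra.sum_counit_smul 𝓡]
  simp only [← 𝓡.eq, Finset.mul_sum, Algebra.TensorProduct.tmul_mul_tmul, one_mul, hΛ _,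
    TensorProduct.smul_tmul, TensorProduct.tmul_sum]

end Bialgebra

section HopfAlgebra

variable {R A ι : Type*} [CommSemiring R] [Semiring A] [HopfAlgebra R A]

lemma sum_antipode_tmul_one_mul_comul {a : A} (𝓡 : Repr R a ι) :
    ∑ i ∈ 𝓡.index, (antipode R (𝓡.left i) ⊗ₜ[R] (1 : A)) * comul (𝓡.right i) = 1 ⊗ₜ a := by
  let Ξ : A ⊗[R] (A ⊗[R] A) →ₗ[R] A ⊗[R] A :=
    (LinearMap.mul' R A ∘ₗ (antipode R).rTensor A).rTensor A ∘ₗ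
      (TensorProduct.assoc R A A A).symm.toLinearMap
  have hΞ (x y z : A) : Ξ (x ⊗ₜ (y ⊗ₜ z)) = (antipode R x * y) ⊗ₜ z := by
    simp [Ξ, TensorProduct.assoc_symm_tmul]
  have coassoc := congrArg Ξ
    (Coalgebra.sum_tmul_tmul_eq 𝓡 (fun i ↦ ℛ R (𝓡.left i)) fun i ↦ ℛ R (𝓡.right i))
  simp only [map_sum, hΞ] at coassoc
  calc ∑ i ∈ 𝓡.index, (antipode R (𝓡.left i) ⊗ₜ[R] (1 : A)) * comul (𝓡.right i)
      = ∑ i ∈ 𝓡.index, ∑ j ∈ (ℛ R (𝓡.right i)).index,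
          (antipode R (𝓡.left i) * (ℛ R (𝓡.right i)).left j) ⊗ₜ (ℛ R (𝓡.right i)).right j := by
        simp_rw [← (ℛ R (𝓡.right _)).eq, Finset.mul_sum, Algebra.TensorProduct.tmul_mul_tmul,
          one_mul]
    _ = ∑ i ∈ 𝓡.index, ∑ j ∈ (ℛ R (𝓡.left i)).index,
          (antipode R ((ℛ R (𝓡.left i)).left j) * (ℛ R (𝓡.left i)).right j) ⊗ₜ 𝓡.right i :=
        coassoc.symm
    _ = ∑ i ∈ 𝓡.index, (counit (R := R) (𝓡.left i) • (1 : A)) ⊗ₜ 𝓡.right i := by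
        simp_rw [← TensorProduct.sum_tmul, HopfAlgebra.sum_antipode_mul_eq_smul]
    _ = 1 ⊗ₜ a := by
        simp_rw [TensorProduct.smul_tmul, ← TensorProduct.tmul_sum, Coalgebra.sum_counit_smul]

lemma IsLeftIntegral.antipode_tmul_one_mul_comul {Λ : A} (hΛ : IsLeftIntegral R Λ) (h : A) :
    (antipode R h ⊗ₜ[R] (1 : A)) * comul Λ = (1 ⊗ₜ h) * comul Λ := by
  let 𝓡 := ℛ R h
  have comul_mul (y : A) : comul (R := R) y * comul Λ = counit (R := R) y • comul Λ := by
    rw [← Bialgebra.comul_mul, hΛ, map_smul]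
  calc (antipode R h ⊗ₜ[R] (1 : A)) * comul Λ
      = ∑ i ∈ 𝓡.index,
          (antipode R (𝓡.left i) ⊗ₜ[R] (1 : A)) * (comul (R := R) (𝓡.right i) * comul Λ) := by
        conv_lhs => rw [← sum_counit_right_smul 𝓡]
        simp only [comul_mul, map_sum, map_smul, TensorProduct.sum_tmul, Finset.sum_mul,
          ← TensorProduct.smul_tmul', smul_mul_assoc, mul_smul_comm]
    _ = (1 ⊗ₜ h) * comul Λ := by
        simp_rw [← mul_assoc, ← Finset.sum_mul, sum_antipode_tmul_one_mul_comul]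

lemma smul_eq_smul_of_tmul_one_mul_comul_eq {a b x : A}
    (h : (a ⊗ₜ[R] (1 : A)) * comul x = (b ⊗ₜ 1) * comul x) (f : A →ₗ[R] R) :
    f x • a = f x • b := by
  let 𝓡 := ℛ R x
  have sum_mul_antipode :
      ∑ i ∈ 𝓡.index, 𝓡.left i * antipode R (rightContract f (𝓡.right i)) = f x • 1 := by
    rw [← counit_rightContract f x]
    exact HopfAlgebra.sum_mul_antipode_eq_smul
      ⟨𝓡.index, 𝓡.left, _, (comul_rightContract f 𝓡).symm⟩
  have key (c : A) : LinearMap.mul' R A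
      ((antipode R ∘ₗ rightContract f).lTensor A ((c ⊗ₜ 1) * comul x)) = f x • c := by
    rw [← 𝓡.eq, Finset.mul_sum]
    simp only [Algebra.TensorProduct.tmul_mul_tmul, one_mul, map_sum, LinearMap.lTensor_tmul,
      LinearMap.comp_apply, LinearMap.mul'_apply, mul_assoc, ← Finset.mul_sum, sum_mul_antipode,
      mul_smul_comm, mul_one]
  rw [← key a, ← key b, h]

end HopfAlgebra

theorem antipode_two_sided_integral_eq_self_general
    (k : Type u) [Field k] (H : Type v) [Ring H] [HopfAlgebra k H]
    (Λ : H)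
    (hleft : ∀ h : H, h * Λ = CoalgebraStruct.counit (R := k) h • Λ)
    (hright : ∀ h : H, Λ * h = CoalgebraStruct.counit (R := k) h • Λ) :
    HopfAlgebra.antipode (R := k) Λ = Λ := by
  rcases eq_or_ne Λ 0 with rfl | hΛ
  · exact map_zero _
  have h : (antipode k Λ ⊗ₜ[k] (1 : H)) * comul Λ = (Λ ⊗ₜ 1) * comul Λ := by
    rw [IsLeftIntegral.antipode_tmul_one_mul_comul hleft,
      IsRightIntegral.one_tmul_mul_comul hright, IsRightIntegral.tmul_one_mul_comul hright]
  obtain ⟨f, hf⟩ := Module.Projective.exists_dual_ne_zero k hΛ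
  exact smul_right_injective H hf (smul_eq_smul_of_tmul_one_mul_comul_eq h f)

/-- Let `H` be a finite-dimensional Hopf algebra over a field `k` with
antipode `S`, and let `Λ ∈ H` be a two-sided integral, i.e. `hΛ = ε(h)Λ = Λh` for all
`h ∈ H`.  Then `S(Λ) = Λ`. -/
theorem antipode_two_sided_integral_eq_self
    (k : Type u) [Field k] (H : Type v) [Ring H] [HopfAlgebra k H] [FiniteDimensional k H]
    (Λ : H)
    (hleft : ∀ h : H, h * Λ = CoalgebraStruct.counit (R := k) h • Λ)
    (hright : ∀ h : H, Λ * h = CoalgebraStruct.counit (R := k) h • Λ) :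
    HopfAlgebra.antipode (R := k) Λ = Λ :=
  antipode_two_sided_integral_eq_self_general k H Λ hleft hright
end
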